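/- Let Σ̂ and Σ be symmetric p×p real matrices and s ≥ 1. Suppose the restricted eigenvalue condition holds for Σ: κ := min over J ⊆ {1,…,p} with |J| ≤ s of the min over u ≠ 0 with |u_{J^c}|₁ ≤ 3|u_J|₁ of u'Σu/|u|₂² > 0. If the entrywise bound max_{1≤j,k≤p} |Σ̂_{jk} − Σ_{jk}| ≤ κ/(300·s) holds, then for every J ⊆ {1,…,p} with |J| ≤ s and every u ∈ ℝ^p with |u_{J^c}|₁ ≤ 3|u_J|₁, one has u'Σ̂u ≥ (κ/2)|u|₂². -/

import Mathlib

open MeasureTheory ProbabilityTheory Matrix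

namespace Paper

variable {Ω E : Type*} [MeasurableSpace Ω] [MeasurableSpace E]

/-- The family of innovations: `some i` is `ε i` for `i : ℤ`, and `none` is the
independent copy `ε₀'` used in the coupled process. All are i.i.d. -/
structure Innov (μ : Measure Ω) (E : Type*) [MeasurableSpace E] : Type _ where
  ε : Option ℤ → Ω → E
  meas : ∀ i, Measurable (ε i)
  indep : iIndepFun ε μ
  ident : ∀ i j, μ.map (ε i) = μ.map (ε j)

/-- history `F_i = (…, ε_{i-1}, ε_i)`, recorded as `k ↦ ε_{i-k}`. -/
def hist {μ : Measure Ω} (I : Innov μ E) (i : ℤ) (ω : Ω) : ℕ → E :=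
  fun k => I.ε (some (i - k)) ω

/-- coupled history `F_i*`, with `ε₀` replaced by the independent copy `ε₀'`. -/
def histStar {μ : Measure Ω} (I : Innov μ E) (i : ℤ) (ω : Ω) : ℕ → E :=
  fun k => if i = (k : ℤ) then I.ε none ω else I.ε (some (i - k)) ω

/-- `‖f‖_q = (E |f|^q)^{1/q}` -/
noncomputable def lqNorm (μ : Measure Ω) (q : ℝ) (f : Ω → ℝ) : ℝ :=
  (∫ ω, |f ω| ^ q ∂μ) ^ (1 / q)

/-- functional dependence measure `δ_{i,q}` of the process `i ↦ g (F_i)` -/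
noncomputable def fdm (μ : Measure Ω) (I : Innov μ E) (g : (ℕ → E) → ℝ) (q : ℝ) (i : ℕ) : ℝ :=
  lqNorm μ q (fun ω => g (hist I i ω) - g (histStar I i ω))

/-- tail sum `Δ_{m,q}` -/
noncomputable def tailSum (μ : Measure Ω) (I : Innov μ E) (g : (ℕ → E) → ℝ) (q : ℝ) (m : ℕ) : ℝ :=
  ∑' i : ℕ, fdm μ I g q (m + i)

/-- dependence adjusted norm `‖·‖_{q,α}` -/
noncomputable def dan (μ : Measure Ω) (I : Innov μ E) (g : (ℕ → E) → ℝ) (q α : ℝ) : ℝ :=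
  ⨆ m : ℕ, ((m : ℝ) + 1) ^ α * tailSum μ I g q m

/-- `ω_{i,q}`, the `ℒ^∞` functional dependence measure of a vector process -/
noncomputable def fdmMax (μ : Measure Ω) (I : Innov μ E) {ι : Type*} [Fintype ι]
    (g : ι → (ℕ → E) → ℝ) (q : ℝ) (i : ℕ) : ℝ :=
  lqNorm μ q (fun ω => ⨆ j, |g j (hist I i ω) - g j (histStar I i ω)|)

/-- `ℒ^∞` dependence adjusted norm `‖ |x.|_∞ ‖_{q,α}` of a vector process -/
noncomputable def danMax (μ : Measure Ω) (I : Innov μ E) {ι : Type*} [Fintype ι]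
    (g : ι → (ℕ → E) → ℝ) (q α : ℝ) : ℝ :=
  ⨆ m : ℕ, ((m : ℝ) + 1) ^ α * ∑' i : ℕ, fdmMax μ I g q (m + i)

noncomputable def l1 {ι : Type*} [Fintype ι] (v : ι → ℝ) : ℝ := ∑ j, |v j|
noncomputable def l2sq {ι : Type*} [Fintype ι] (v : ι → ℝ) : ℝ := ∑ j, v j ^ 2
noncomputable def l2 {ι : Type*} [Fintype ι] (v : ι → ℝ) : ℝ := Real.sqrt (l2sq v)
noncomputable def linf {ι : Type*} [Fintype ι] (v : ι → ℝ) : ℝ := ⨆ j, |v j|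

/-- restriction of a vector to a coordinate set (zero outside `J`) -/
noncomputable def restr {ι : Type*} [Fintype ι] [DecidableEq ι] (J : Finset ι) (v : ι → ℝ) : ι → ℝ :=
  fun j => if j ∈ J then v j else 0

/-- `b` minimizes `n⁻¹ |Y - Xb|₂² + λ |b|₁` -/
def IsLassoSol {n p : ℕ} (X : Matrix (Fin n) (Fin p) ℝ) (Y : Fin n → ℝ) (lam : ℝ)
    (b : Fin p → ℝ) : Prop :=
  ∀ b' : Fin p → ℝ,
    (n : ℝ)⁻¹ * l2sq (Y - X.mulVec b) + lam * l1 b ≤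
      (n : ℝ)⁻¹ * l2sq (Y - X.mulVec b') + lam * l1 b'

/-!
Write `u'Σ̂u = u'Σu + u'(Σ̂ - Σ)u`. Each entry of `Σ̂ - Σ` is at most `δ = κ/(300s)`, so
`|u'(Σ̂ - Σ)u| ≤ δ |u|₁²`. On the cone `|u_{Jᶜ}|₁ ≤ 3|u_J|₁` we have `|u|₁ ≤ 4|u_J|₁`, and
Cauchy–Schwarz on the at most `s` coordinates of `J` gives `|u_J|₁² ≤ s|u|₂²`. Hence
`|u'(Σ̂ - Σ)u| ≤ 16 s δ |u|₂² = (16/300) κ |u|₂² ≤ (κ/2)|u|₂²`, which the restricted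
eigenvalue condition `u'Σu ≥ κ|u|₂²` absorbs.
-/

section Norms

variable {ι : Type*} [Fintype ι]

lemma l1_nonneg (u : ι → ℝ) : 0 ≤ l1 u :=
  Finset.sum_nonneg fun _ _ => abs_nonneg _

lemma l2sq_nonneg (u : ι → ℝ) : 0 ≤ l2sq u :=
  Finset.sum_nonneg fun _ _ => sq_nonneg _

variable [DecidableEq ι]

lemma l1_restr (J : Finset ι) (u : ι → ℝ) : l1 (restr J u) = ∑ j ∈ J, |u j| := by
  simp only [l1, restr, apply_ite, abs_zero]
  exact Fintype.sum_ite_mem J fun j => |u j|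

lemma l1_restr_add_l1_restr_compl (J : Finset ι) (u : ι → ℝ) :
    l1 (restr J u) + l1 (restr Jᶜ u) = l1 u := by
  rw [l1_restr, l1_restr, Finset.sum_add_sum_compl, l1]

lemma sq_l1_restr_le_card_mul_l2sq (J : Finset ι) (u : ι → ℝ) :
    l1 (restr J u) ^ 2 ≤ J.card * l2sq u :=
  calc l1 (restr J u) ^ 2 = (∑ j ∈ J, |u j|) ^ 2 := by rw [l1_restr]
    _ ≤ J.card * ∑ j ∈ J, |u j| ^ 2 := sq_sum_le_card_mul_sum_sq
    _ = J.card * ∑ j ∈ J, u j ^ 2 := by simp only [sq_abs]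
    _ ≤ J.card * l2sq u := by
      gcongr
      exact Finset.sum_le_sum_of_subset_of_nonneg (Finset.subset_univ J)
        fun _ _ _ => sq_nonneg _

lemma sq_l1_le_of_cone {J : Finset ι} {u : ι → ℝ} {c : ℝ}
    (hcone : l1 (restr Jᶜ u) ≤ c * l1 (restr J u)) :
    l1 u ^ 2 ≤ (1 + c) ^ 2 * J.card * l2sq u := by
  have hl1 : l1 u ≤ (1 + c) * l1 (restr J u) := by
    rw [← l1_restr_add_l1_restr_compl J u]
    linarith
  calc l1 u ^ 2 ≤ ((1 + c) * l1 (restr J u)) ^ 2 := pow_le_pow_left₀ (l1_nonneg u) hl1 2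
    _ = (1 + c) ^ 2 * l1 (restr J u) ^ 2 := by ring
    _ ≤ (1 + c) ^ 2 * J.card * l2sq u := by
      rw [mul_assoc]
      gcongr
      exact sq_l1_restr_le_card_mul_l2sq J u

end Norms

lemma abs_dotProduct_mulVec_le {ι : Type*} [Fintype ι] (A : Matrix ι ι ℝ) {δ : ℝ}
    (hA : ∀ j k, |A j k| ≤ δ) (u v : ι → ℝ) :
    |u ⬝ᵥ A *ᵥ v| ≤ δ * l1 u * l1 v :=
  calc |u ⬝ᵥ A *ᵥ v| = |∑ j, ∑ k, u j * A j k * v k| := by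
        simp only [dotProduct, mulVec, Finset.mul_sum, mul_assoc]
    _ ≤ ∑ j, ∑ k, |u j * A j k * v k| :=
        (Finset.abs_sum_le_sum_abs _ _).trans
          (Finset.sum_le_sum fun _ _ => Finset.abs_sum_le_sum_abs _ _)
    _ ≤ ∑ j, ∑ k, |u j| * δ * |v k| := by
        gcongr with j _ k _
        rw [abs_mul, abs_mul]
        gcongr
        exact hA j k
    _ = δ * l1 u * l1 v := by
        rw [mul_assoc, l1, l1, Finset.sum_mul_sum, Finset.mul_sum]
        refine Finset.sum_congr rfl fun _ _ => ?_
        rw [Finset.mul_sum]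
        exact Finset.sum_congr rfl fun _ _ => by ring

lemma abs_dotProduct_mulVec_le_of_cone {ι : Type*} [Fintype ι] [DecidableEq ι]
    (A : Matrix ι ι ℝ) {δ c : ℝ} (hδ : 0 ≤ δ) (hA : ∀ j k, |A j k| ≤ δ) {J : Finset ι}
    {u : ι → ℝ} (hcone : l1 (restr Jᶜ u) ≤ c * l1 (restr J u)) :
    |u ⬝ᵥ A *ᵥ u| ≤ δ * (1 + c) ^ 2 * J.card * l2sq u :=
  calc |u ⬝ᵥ A *ᵥ u| ≤ δ * l1 u * l1 u := abs_dotProduct_mulVec_le A hA u u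
    _ = δ * l1 u ^ 2 := by ring
    _ ≤ δ * ((1 + c) ^ 2 * J.card * l2sq u) := by gcongr; exact sq_l1_le_of_cone hcone
    _ = δ * (1 + c) ^ 2 * J.card * l2sq u := by ring

theorem sample_restricted_eigenvalue_general {p : ℕ}
    (Sighat Sig : Matrix (Fin p) (Fin p) ℝ)
    (s : ℕ) (κ : ℝ) (hκpos : 0 < κ)
    (hRE : ∀ J : Finset (Fin p), J.card ≤ s → ∀ u : Fin p → ℝ, u ≠ 0 →
      l1 (restr Jᶜ u) ≤ 3 * l1 (restr J u) → κ * l2sq u ≤ u ⬝ᵥ Sig.mulVec u)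
    (hentry : ∀ j k, |Sighat j k - Sig j k| ≤ κ / (300 * s)) :
    ∀ J : Finset (Fin p), J.card ≤ s → ∀ u : Fin p → ℝ,
      l1 (restr Jᶜ u) ≤ 3 * l1 (restr J u) → (κ / 2) * l2sq u ≤ u ⬝ᵥ Sighat.mulVec u := by
  intro J hJ u hcone
  rcases eq_or_ne u 0 with rfl | hu
  · simp [l2sq]
  set δ := κ / (300 * s)
  -- `s / s ≤ 1` also covers `s = 0`, where `δ = κ / 0 = 0`.
  have hδs : δ * s ≤ κ / 300 :=
    calc δ * s = κ / 300 * (s / s) := by ring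
      _ ≤ κ / 300 := mul_le_of_le_one_right (by positivity) (div_self_le_one _)
  have hδ : 0 ≤ δ := by positivity
  have hl2 := l2sq_nonneg u
  have hpert : |u ⬝ᵥ (Sighat - Sig) *ᵥ u| ≤ κ / 2 * l2sq u :=
    calc |u ⬝ᵥ (Sighat - Sig) *ᵥ u| ≤ δ * (1 + 3) ^ 2 * J.card * l2sq u :=
          abs_dotProduct_mulVec_le_of_cone _ hδ
            (fun j k => by simpa using hentry j k) hcone
      _ = 16 * (δ * J.card) * l2sq u := by ring
      _ ≤ 16 * (δ * s) * l2sq u := by gcongr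
      _ ≤ 16 * (κ / 300) * l2sq u := by gcongr
      _ ≤ κ / 2 * l2sq u := by gcongr; linarith
  have hsplit : u ⬝ᵥ Sighat *ᵥ u = u ⬝ᵥ Sig *ᵥ u + u ⬝ᵥ (Sighat - Sig) *ᵥ u := by
    rw [sub_mulVec, dotProduct_sub]; ring
  linarith [hRE J hJ u hu hcone, neg_abs_le (u ⬝ᵥ (Sighat - Sig) *ᵥ u)]

/-- the sample restricted eigenvalue bound holds once the sample
covariance matrix is entrywise close to a population matrix satisfying RE(s,3). -/
theorem sample_restricted_eigenvalue {p : ℕ}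
    (Sighat Sig : Matrix (Fin p) (Fin p) ℝ) (hSighat : Sighat.IsSymm) (hSig : Sig.IsSymm)
    (s : ℕ) (hs : 1 ≤ s) (κ : ℝ) (hκpos : 0 < κ)
    (hRE : ∀ J : Finset (Fin p), J.card ≤ s → ∀ u : Fin p → ℝ, u ≠ 0 →
      l1 (restr Jᶜ u) ≤ 3 * l1 (restr J u) → κ * l2sq u ≤ u ⬝ᵥ Sig.mulVec u)
    (hentry : ∀ j k, |Sighat j k - Sig j k| ≤ κ / (300 * s)) :
    ∀ J : Finset (Fin p), J.card ≤ s → ∀ u : Fin p → ℝ,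
      l1 (restr Jᶜ u) ≤ 3 * l1 (restr J u) → (κ / 2) * l2sq u ≤ u ⬝ᵥ Sighat.mulVec u :=
  sample_restricted_eigenvalue_general Sighat Sig s κ hκpos hRE hentry

end Paper
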